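/- Let d be a random variable with density f_d(r) = 2r/(ρ² - ξ²) on [ξ, ρ] (distance of a uniformly distributed point on the annulus with radii ξ < ρ). Let Z be Gamma(L,1)-distributed, independent of d, and G > 0, α > 2. Then P(Z < G d^{2α}) = 1 - (1/(α(ρ²-ξ²) G^{1/α})) ∑_{m=0}^{L-1} [Γ(m + 1/α, G ξ^{2α}) - Γ(m + 1/α, G ρ^{2α})]/Γ(m+1). -/

import Mathlib

open Real

/-- Lower incomplete gamma function. -/
noncomputable def lowerGamma (a x : ℝ) : ℝ := ∫ t in (0:ℝ)..x, t ^ (a - 1) * Real.exp (-t)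

/-- Upper incomplete gamma function. -/
noncomputable def upperGamma (a x : ℝ) : ℝ := ∫ t in Set.Ioi x, t ^ (a - 1) * Real.exp (-t)

/-!
Write `x(r) = G r^(2α)`. For a positive integer `L` the Erlang distribution function is
`γ(L, x) / Γ(L) = 1 - e^(-x) ∑_{m < L} x^m / m!`, since the right-hand side is an antiderivative
of `x^(L-1) e^(-x) / (L-1)!` vanishing at `0`. Averaging against `2r / (ρ² - ξ²)` turns the constant
term into `1`, and in the `m`-th term the substitution `t = x(r)`, under which
`2r dr = t^(1/α - 1) dt / (α G^(1/α))`, produces `∫_{x(ξ)}^{x(ρ)} t^(m + 1/α - 1) e^(-t) dt`,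
the difference of two upper incomplete gamma values.
-/

open Finset Set MeasureTheory intervalIntegral
open scoped Nat

theorem hasDerivAt_sum_range_pow_div_factorial (n : ℕ) (x : ℝ) :
    HasDerivAt (fun x ↦ ∑ m ∈ range (n + 1), x ^ m / (m ! : ℝ))
      (∑ m ∈ range n, x ^ m / (m ! : ℝ)) x := by
  induction n with
  | zero => simpa using hasDerivAt_const x (1 : ℝ)
  | succ n ih =>
    simp_rw [sum_range_succ _ (n + 1)]
    refine (ih.add ((hasDerivAt_pow (n + 1) x).div_const ((n + 1)! : ℝ))).congr_deriv ?_
    rw [sum_range_succ _ n, Nat.factorial_succ, Nat.cast_mul, Nat.add_sub_cancel]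
    field_simp

theorem integral_pow_mul_exp_neg (n : ℕ) (x : ℝ) :
    ∫ t in (0 : ℝ)..x, t ^ n * exp (-t) =
      n ! * (1 - exp (-x) * ∑ m ∈ range (n + 1), x ^ m / (m ! : ℝ)) := by
  have hF (t : ℝ) :
      HasDerivAt (fun t ↦ -(n ! * (exp (-t) * ∑ m ∈ range (n + 1), t ^ m / (m ! : ℝ))))
        (t ^ n * exp (-t)) t := by
    refine (((hasDerivAt_neg t).exp.mul (hasDerivAt_sum_range_pow_div_factorial n t)).const_mul
      (n ! : ℝ)).neg.congr_deriv ?_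
    rw [sum_range_succ]
    field_simp
    ring
  have hsum_zero : ∑ m ∈ range (n + 1), (0 : ℝ) ^ m / (m ! : ℝ) = 1 := by
    simp [sum_range_succ']
  rw [integral_eq_sub_of_hasDerivAt (fun t _ ↦ hF t)
    ((by fun_prop : Continuous fun t : ℝ ↦ t ^ n * exp (-t)).intervalIntegrable _ _),
    hsum_zero, neg_zero, exp_zero]
  ring

theorem lowerGamma_natCast_div_Gamma {L : ℕ} (hL : 0 < L) (x : ℝ) :
    lowerGamma L x / Gamma L = 1 - exp (-x) * ∑ m ∈ range L, x ^ m / (m ! : ℝ) := by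
  obtain ⟨n, rfl⟩ := Nat.exists_eq_add_one.2 hL
  have hpow (t : ℝ) : t ^ (((n + 1 : ℕ) : ℝ) - 1) = t ^ n := by
    rw [Nat.cast_succ, add_sub_cancel_right, rpow_natCast]
  simp only [lowerGamma, hpow, integral_pow_mul_exp_neg]
  rw [Nat.cast_succ, Gamma_nat_eq_factorial]
  field_simp

theorem upperGamma_sub_upperGamma {a x y : ℝ} (ha : 0 < a) (hx : 0 ≤ x) (hy : 0 ≤ y) :
    upperGamma a x - upperGamma a y = ∫ t in x..y, t ^ (a - 1) * exp (-t) := by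
  have hint : IntegrableOn (fun t : ℝ ↦ t ^ (a - 1) * exp (-t)) (Ioi 0) := by
    simpa only [mul_comm] using GammaIntegral_convergent ha
  exact integral_Ioi_sub_Ioi' (hint.mono_set (Ioi_subset_Ioi hx))
    (hint.mono_set (Ioi_subset_Ioi hy))

theorem integral_comp_mul_rpow_mul_two_mul {G α a b : ℝ} {g : ℝ → ℝ} (hG : 0 < G) (hα : α ≠ 0)
    (ha : 0 < a) (hb : 0 < b) (hg : ContinuousOn g (Ioi 0)) :
    ∫ r in a..b, g (G * r ^ (2 * α)) * (2 * r) =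
      1 / (α * G ^ (1 / α)) * ∫ t in G * a ^ (2 * α)..G * b ^ (2 * α), t ^ (1 / α - 1) * g t := by
  have hpos : ∀ r ∈ uIcc a b, 0 < r := fun r hr ↦ (lt_min ha hb).trans_le hr.1
  have hderiv : ∀ r ∈ uIcc a b,
      HasDerivAt (fun r ↦ G * r ^ (2 * α)) (G * (2 * α * r ^ (2 * α - 1))) r :=
    fun r hr ↦ (hasDerivAt_rpow_const (Or.inl (hpos r hr).ne')).const_mul G
  have hderiv_cont : ContinuousOn (fun r ↦ G * (2 * α * r ^ (2 * α - 1))) (uIcc a b) :=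
    continuousOn_const.mul (continuousOn_const.mul
      (continuousOn_id.rpow_const fun r hr ↦ Or.inl (hpos r hr).ne'))
  have himage : (fun r ↦ G * r ^ (2 * α)) '' uIcc a b ⊆ Ioi 0 := by
    rintro _ ⟨r, hr, rfl⟩
    exact mul_pos hG (rpow_pos_of_pos (hpos r hr) _)
  have hcont : ContinuousOn (fun t ↦ 1 / (α * G ^ (1 / α)) * (t ^ (1 / α - 1) * g t))
      ((fun r ↦ G * r ^ (2 * α)) '' uIcc a b) :=
    continuousOn_const.mul ((continuousOn_id.rpow_const fun t ht ↦ Or.inl (himage ht).ne').mul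
      (hg.mono himage))
  rw [← intervalIntegral.integral_const_mul, ← integral_comp_mul_deriv' hderiv hderiv_cont hcont]
  refine integral_congr fun r hr ↦ ?_
  have hr := hpos r hr
  have key : (G * r ^ (2 * α)) ^ (1 / α - 1) * (G * (2 * α * r ^ (2 * α - 1))) =
      2 * α * G ^ (1 / α) * r := by
    calc _ = 2 * α * (G ^ (1 / α - 1) * G) * (r ^ (2 * α * (1 / α - 1)) * r ^ (2 * α - 1)) := by
          rw [mul_rpow hG.le (rpow_nonneg hr.le _), ← rpow_mul hr.le]; ring
      _ = 2 * α * G ^ (1 / α) * r ^ (1 : ℝ) := by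
          rw [← rpow_add_one hG.ne', ← rpow_add hr]; congr 3 <;> field_simp <;> ring
      _ = _ := by rw [rpow_one]
  simp only [Function.comp]
  calc _ = 1 / (α * G ^ (1 / α)) * g (G * r ^ (2 * α)) * ((G * r ^ (2 * α)) ^ (1 / α - 1) *
        (G * (2 * α * r ^ (2 * α - 1)))) := by
        rw [key]; field_simp
    _ = _ := by ring

theorem integral_pow_mul_exp_neg_comp_mul_rpow {G α a b : ℝ} (hG : 0 < G) (hα : 0 < α)
    (ha : 0 < a) (hb : 0 < b) (m : ℕ) :
    ∫ r in a..b, (G * r ^ (2 * α)) ^ m * exp (-(G * r ^ (2 * α))) * (2 * r) =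
      1 / (α * G ^ (1 / α)) * (upperGamma (m + 1 / α) (G * a ^ (2 * α)) -
        upperGamma (m + 1 / α) (G * b ^ (2 * α))) := by
  rw [integral_comp_mul_rpow_mul_two_mul (g := fun t ↦ t ^ m * exp (-t)) hG hα.ne' ha hb
      (by fun_prop), upperGamma_sub_upperGamma (by positivity) (by positivity) (by positivity)]
  congr 1
  refine integral_congr fun t ht ↦ ?_
  have ht : 0 < t := (lt_min (by positivity) (by positivity)).trans_le ht.1
  rw [add_sub_assoc, rpow_add ht, rpow_natCast]
  ring

/-- Idle probability of the DC-combiner: averaging the Gamma(L,1) CDF (of Z) at the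
    threshold G d^{2α} over the distance density f_d(r) = 2r/(ρ²-ξ²) on [ξ,ρ] gives
    P(Z < G d^{2α}) = 1 - (1/(α(ρ²-ξ²)G^{1/α})) ∑_{m=0}^{L-1} [Γ(m+1/α,Gξ^{2α}) - Γ(m+1/α,Gρ^{2α})]/Γ(m+1). -/
theorem dc_idle_probability (G α ξ ρ : ℝ) (L : ℕ) (hL : 0 < L) (hG : 0 < G)
    (hα : 2 < α) (hξ : 0 < ξ) (hξρ : ξ < ρ) :
    ∫ r in ξ..ρ, (lowerGamma L (G * r ^ (2 * α)) / Real.Gamma L) * (2 * r / (ρ ^ 2 - ξ ^ 2)) =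
      1 - (1 / (α * (ρ ^ 2 - ξ ^ 2) * G ^ (1 / α))) *
        ∑ m ∈ Finset.range L,
          (upperGamma ((m : ℝ) + 1 / α) (G * ξ ^ (2 * α)) -
            upperGamma ((m : ℝ) + 1 / α) (G * ρ ^ (2 * α))) / Real.Gamma (m + 1) := by
  have hα₀ : 0 < α := by linarith
  have hρ : 0 < ρ := hξ.trans hξρ
  have hD : ρ ^ 2 - ξ ^ 2 ≠ 0 := (sub_pos.2 (pow_lt_pow_left₀ hξρ hξ.le two_ne_zero)).ne'
  have hterm (m : ℕ) : IntervalIntegrable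
      (fun r ↦ (G * r ^ (2 * α)) ^ m * exp (-(G * r ^ (2 * α))) * (2 * r) / m !) volume ξ ρ :=
    (by fun_prop (disch := positivity) : Continuous _).intervalIntegrable _ _
  have hlinear : ∫ r in ξ..ρ, 2 * r = ρ ^ 2 - ξ ^ 2 := by
    rw [intervalIntegral.integral_const_mul, integral_id]; ring
  calc _ = ∫ r in ξ..ρ, (2 * r - ∑ m ∈ range L,
        (G * r ^ (2 * α)) ^ m * exp (-(G * r ^ (2 * α))) * (2 * r) / m !) / (ρ ^ 2 - ξ ^ 2) := by
        refine integral_congr fun r _ ↦ ?_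
        rw [lowerGamma_natCast_div_Gamma hL, mul_sum, sub_mul, one_mul, sum_mul, sub_div, sum_div]
        congr 1
        exact sum_congr rfl fun m _ ↦ by ring
    _ = ((ρ ^ 2 - ξ ^ 2) - ∑ m ∈ range L,
        (∫ r in ξ..ρ, (G * r ^ (2 * α)) ^ m * exp (-(G * r ^ (2 * α))) * (2 * r)) / m !) /
        (ρ ^ 2 - ξ ^ 2) := by
        rw [intervalIntegral.integral_div, intervalIntegral.integral_sub
          ((by fun_prop : Continuous fun r : ℝ ↦ 2 * r).intervalIntegrable _ _)
          (by simpa only [Finset.sum_fn] using IntervalIntegrable.sum (range L) fun m _ ↦ hterm m),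
          intervalIntegral.integral_finsetSum fun m _ ↦ hterm m]
        simp only [intervalIntegral.integral_div, hlinear]
    _ = _ := by
        simp only [integral_pow_mul_exp_neg_comp_mul_rpow hG hα₀ hξ hρ, Gamma_nat_eq_factorial]
        rw [sub_div, div_self hD, mul_sum, sum_div]
        congr 1
        exact sum_congr rfl fun m _ ↦ by field_simp
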